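/- The Fibonacci sequence F (with F_1 = F_2 = 1, F_{n+2} = F_{n+1} + F_n, and the F-factorial of 0 taken to be 1) is cobweb admissible: every Fibonomial coefficient \binom{n}{k}_F is a natural number. -/
import Mathlib


/-- F-factorial: n_F! = F_1 * F_2 * ... * F_n, with 0_F! = 1. -/
def ffact (F : ℕ → ℕ) (n : ℕ) : ℕ := ∏ i ∈ Finset.range n, F (i + 1)

/-- F-nomial coefficient as a rational: n_F! / (k_F! * (n-k)_F!). -/
def fnomial (F : ℕ → ℕ) (n k : ℕ) : ℚ :=
  (ffact F n : ℚ) / ((ffact F k : ℚ) * (ffact F (n - k) : ℚ))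

lemma ffact_succ (F : ℕ → ℕ) (n : ℕ) : ffact F (n + 1) = ffact F n * F (n + 1) := by
  simp [ffact, Finset.prod_range_succ]

lemma ffact_fib_pos (n : ℕ) : 0 < ffact Nat.fib n := by
  apply Finset.prod_pos
  intro i _
  exact Nat.fib_pos.2 (Nat.succ_pos i)

lemma fnomial_recur (a b : ℕ) :
    fnomial Nat.fib (a + b + 2) (a + 1) =
      (Nat.fib (a + 2) : ℚ) * fnomial Nat.fib (a + b + 1) (a + 1) +
      (Nat.fib b : ℚ) * fnomial Nat.fib (a + b + 1) a := by
  have h1 : a + b + 2 - (a + 1) = b + 1 := by omega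
  have h2 : a + b + 1 - (a + 1) = b := by omega
  have h3 : a + b + 1 - a = b + 1 := by omega
  have hfib : Nat.fib (a + b + 2) =
      Nat.fib (a + 1) * Nat.fib b + Nat.fib (a + 2) * Nat.fib (b + 1) := by
    have := Nat.fib_add (a + 1) b
    convert this using 2 <;> omega
  have hn : ffact Nat.fib (a + b + 2) = ffact Nat.fib (a + b + 1) * Nat.fib (a + b + 2) :=
    ffact_succ _ _
  have hk : ffact Nat.fib (a + 1) = ffact Nat.fib a * Nat.fib (a + 1) := ffact_succ _ _
  have hb : ffact Nat.fib (b + 1) = ffact Nat.fib b * Nat.fib (b + 1) := ffact_succ _ _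
  have pa := ffact_fib_pos a
  have pb := ffact_fib_pos b
  have pfa : (0:ℚ) < Nat.fib (a + 1) := by exact_mod_cast Nat.fib_pos.2 (Nat.succ_pos a)
  have pfb : (0:ℚ) < Nat.fib (b + 1) := by exact_mod_cast Nat.fib_pos.2 (Nat.succ_pos b)
  have pa' : (0:ℚ) < (ffact Nat.fib a : ℚ) := by exact_mod_cast pa
  have pb' : (0:ℚ) < (ffact Nat.fib b : ℚ) := by exact_mod_cast pb
  unfold fnomial
  rw [h1, h2, h3, hn, hk, hb, hfib]
  push_cast
  field_simp
  ring
theorem fibonomial_admissible (n k : ℕ) (hk : k ≤ n) :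
    ∃ m : ℕ, fnomial Nat.fib n k = (m : ℚ) := by
  obtain ⟨b, rfl⟩ := Nat.exists_eq_add_of_le hk
  clear hk
  induction' hN : k + b using Nat.strong_induction_on with N ih generalizing k b
  subst hN
  have hpos : (0:ℚ) < (ffact Nat.fib (k + b) : ℚ) := by exact_mod_cast ffact_fib_pos (k + b)
  rcases Nat.eq_zero_or_pos k with rfl | hk0
  · refine ⟨1, ?_⟩
    rw [Nat.zero_add] at hpos ⊢; simp only [fnomial, Nat.sub_zero]
    rw [show ffact Nat.fib 0 = 1 from rfl]
    push_cast
    rw [one_mul]; exact div_self (ne_of_gt hpos)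
  · rcases Nat.eq_zero_or_pos b with rfl | hb0
    · refine ⟨1, ?_⟩
      simp only [fnomial, Nat.add_zero, Nat.sub_self]
      rw [show ffact Nat.fib 0 = 1 from rfl]
      push_cast
      rw [mul_one]; exact div_self (ne_of_gt hpos)
    · obtain ⟨a, rfl⟩ := Nat.exists_eq_add_of_lt hk0
      obtain ⟨c, rfl⟩ := Nat.exists_eq_add_of_lt hb0
      simp only [Nat.zero_add] at *
      have e1 : a + 1 + (c + 1) = a + c + 2 := by omega
      obtain ⟨m1, hm1⟩ := ih (a + c + 1) (by omega) (a + 1) c (by omega)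
      obtain ⟨m2, hm2⟩ := ih (a + c + 1) (by omega) a (c + 1) (by omega)
      refine ⟨Nat.fib (a + 2) * m1 + Nat.fib c * m2, ?_⟩
      rw [e1, fnomial_recur a c, hm1, hm2]
      push_cast
      ring
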